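/- arXiv:math/0207125 — 3 statements merged into one kernel-verified Lean document; each statement's English description precedes it below -/
import Mathlib

section
/- A closed densely defined operator X from H0 to H1 is a weak solution of the Riccati equation A1 X - X A0 - X V X + V* = 0 if and only if the graph subspace G(H0, X) = {x ⊕ Xx : x in Dom(X)} is invariant for the operator B, i.e., B maps G(H0,X) into itself. -/
/-!
A closed operator is its own double adjoint: `(a, b)` lies in the graph of `X` iff
`⟪X* y, a⟫ = ⟪y, b⟫` for every `y ∈ Dom X*`. For `x ∈ Dom X`, the image
`B (x ⊕ X x) = (A₀ x + V X x) ⊕ (V* x + A₁ X x)` therefore lies in the graph iff, for all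
`y ∈ Dom X*`, `⟪X* y, A₀ x + V X x⟫ = ⟪y, V* x + A₁ X x⟫`; moving `V*` and `A₁ = A₁*` to the
other side, this is exactly the weak Riccati identity for the pair `x, y`.
-/

open scoped ComplexInnerProductSpace

namespace LinearPMap

theorem forall_mem_graph_iff {R E F : Type*} [Ring R] [AddCommGroup E] [Module R E]
    [AddCommGroup F] [Module R F] (T : E →ₗ.[R] F) (P : E × F → Prop) :
    (∀ u ∈ T.graph, P u) ↔ ∀ x : T.domain, P (x, T x) := by
  refine ⟨fun h x => h _ (T.mem_graph x), fun h ⟨a, b⟩ hu => ?_⟩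
  obtain ⟨x, rfl, rfl⟩ := T.mem_graph_iff.1 hu
  exact h x

end LinearPMap

section

variable {𝕜 E F : Type*} [RCLike 𝕜]
  [NormedAddCommGroup E] [InnerProductSpace 𝕜 E] [CompleteSpace E]
  [NormedAddCommGroup F] [InnerProductSpace 𝕜 F] [CompleteSpace F]

namespace Submodule

open WithLp in
theorem adjoint_adjoint_of_isClosed {g : Submodule 𝕜 (E × F)} (hg : IsClosed (g : Set (E × F))) :
    g.adjoint.adjoint = g := by
  refine le_antisymm (fun x hx => ?_) (fun x hx => ?_)
  · set K := g.comap (WithLp.linearEquiv 2 𝕜 (E × F)).toLinearMap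
    have hK : IsClosed (K : Set (WithLp 2 (E × F))) :=
      hg.preimage (WithLp.prod_continuous_ofLp 2 E F)
    have hxK : toLp 2 x ∈ Kᗮᗮ := by
      intro z hz
      -- rotating a vector orthogonal to `g` by a quarter turn lands in `g.adjoint`
      have hzg : (z.snd, -z.fst) ∈ g.adjoint := by
        rw [mem_adjoint_iff]
        intro a b hab
        have h := hz (toLp 2 (a, b)) hab
        simp only [prod_inner_apply, ofLp_fst, ofLp_snd] at h
        rw [inner_neg_right, sub_neg_eq_add, add_comm, h]
      have h := (mem_adjoint_iff _ _).1 hx _ _ hzg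
      simp only [prod_inner_apply, ofLp_fst, ofLp_snd, inner_neg_left] at h ⊢
      linear_combination -h
    rwa [orthogonal_orthogonal_eq_closure, hK.submodule_topologicalClosure_eq] at hxK
  · rw [mem_adjoint_iff]
    intro c d hcd
    have h := congrArg (starRingEnd 𝕜) ((mem_adjoint_iff _ _).1 hcd x.1 x.2 hx)
    simp only [map_sub, inner_conj_symm, map_zero] at h
    linear_combination -h

end Submodule

namespace LinearPMap

theorem mem_graph_iff_forall_adjoint {T : E →ₗ.[𝕜] F} (hT : Dense (T.domain : Set E))
    (hTc : T.IsClosed) (a : E) (b : F) :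
    (a, b) ∈ T.graph ↔ ∀ y : T†.domain, inner 𝕜 (T† y) a = inner 𝕜 (y : F) b := by
  rw [← Submodule.adjoint_adjoint_of_isClosed hTc, ← adjoint_graph_eq_graph_adjoint hT,
    Submodule.mem_adjoint_iff]
  simp [mem_graph_iff, sub_eq_zero]

end LinearPMap

end

theorem weak_solution_riccati_iff_graph_invariant_general
    {H0 H1 : Type*}
    [NormedAddCommGroup H0] [InnerProductSpace ℂ H0] [CompleteSpace H0]
    [NormedAddCommGroup H1] [InnerProductSpace ℂ H1] [CompleteSpace H1]
    (A0 : H0 →L[ℂ] H0) (A1 : H1 →L[ℂ] H1) (V : H1 →L[ℂ] H0)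
    (hA1 : IsSelfAdjoint A1)
    (B : H0 × H1 →L[ℂ] H0 × H1)
    (hB : ∀ u : H0 × H1, B u = (A0 u.1 + V u.2, ContinuousLinearMap.adjoint V u.1 + A1 u.2))
    (X : H0 →ₗ.[ℂ] H1)
    (hdense : Dense (X.domain : Set H0))
    (hclosed : IsClosed (X.graph : Set (H0 × H1))) :
    -- weak solution
    (∀ (x : X.domain) (y : X.adjoint.domain),
        ⟪A1 (y : H1), X x⟫ - ⟪X.adjoint y, A0 (x : H0)⟫ - ⟪X.adjoint y, V (X x)⟫
          + ⟪V (y : H1), (x : H0)⟫ = 0) ↔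
    -- the graph subspace is `B`-invariant
    (∀ u ∈ X.graph, B u ∈ X.graph) := by
  rw [X.forall_mem_graph_iff]
  refine forall_congr' fun x => ?_
  rw [hB, LinearPMap.mem_graph_iff_forall_adjoint hdense hclosed]
  refine forall_congr' fun y => ?_
  dsimp only
  rw [inner_add_right, inner_add_right, ContinuousLinearMap.adjoint_inner_right,
    ← ContinuousLinearMap.adjoint_inner_left A1, hA1.adjoint_eq, ← sub_eq_zero]
  constructor <;> intro h <;> linear_combination -h

/-- A closed densely defined operator `X` from `H₀` to `H₁` is a weak solution
of the Riccati equation `A₁ X - X A₀ - X V X + V* = 0` iff the graph subspace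
`G(H₀, X) = {x ⊕ X x : x ∈ Dom X}` is invariant for the block operator
`B (x₀ ⊕ x₁) = (A₀ x₀ + V x₁) ⊕ (V* x₀ + A₁ x₁)`. -/
theorem weak_solution_riccati_iff_graph_invariant
    {H0 H1 : Type*}
    [NormedAddCommGroup H0] [InnerProductSpace ℂ H0] [CompleteSpace H0]
    [TopologicalSpace.SeparableSpace H0]
    [NormedAddCommGroup H1] [InnerProductSpace ℂ H1] [CompleteSpace H1]
    [TopologicalSpace.SeparableSpace H1]
    (A0 : H0 →L[ℂ] H0) (A1 : H1 →L[ℂ] H1) (V : H1 →L[ℂ] H0)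
    (hA0 : IsSelfAdjoint A0) (hA1 : IsSelfAdjoint A1)
    (B : H0 × H1 →L[ℂ] H0 × H1)
    (hB : ∀ u : H0 × H1, B u = (A0 u.1 + V u.2, ContinuousLinearMap.adjoint V u.1 + A1 u.2))
    (X : H0 →ₗ.[ℂ] H1)
    (hdense : Dense (X.domain : Set H0))
    (hclosed : IsClosed (X.graph : Set (H0 × H1))) :
    -- weak solution
    (∀ (x : X.domain) (y : X.adjoint.domain),
        ⟪A1 (y : H1), X x⟫ - ⟪X.adjoint y, A0 (x : H0)⟫ - ⟪X.adjoint y, V (X x)⟫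
          + ⟪V (y : H1), (x : H0)⟫ = 0) ↔
    -- the graph subspace is `B`-invariant
    (∀ u ∈ X.graph, B u ∈ X.graph) :=
  weak_solution_riccati_iff_graph_invariant_general A0 A1 V hA1 B hB X hdense hclosed
end

section
/- Let G be a closed B-invariant subspace of H, let P be the orthogonal projection of H onto H0 ⊕ {0} and Q the orthogonal projection onto G. Then ||P - Q|| = 1 together with M_10(P,Q) = M_01(P,Q) = {0} holds if and only if G = {x ⊕ Xx : x in Dom(X)} for some closed densely defined unbounded (not norm-continuous on its domain) operator X from H0 to H1 which is a weak solution of the Riccati equation. -/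
/-!
`M₀₁(P, Q) = 0` says that `G` meets `0 ⊕ H₁` trivially, i.e. that `G` is the graph of an operator
`X`, closed because `G` is; then `M₁₀(P, Q) = 0` says that `Gᗮ` meets `H₀ ⊕ 0` trivially, i.e. that
`X` is densely defined. Splitting `f = (f - Qf) + Qf` shows `‖P - Q‖ ≤ c` as soon as `P` shrinks
`Gᗮ` and `1 - P` shrinks `G` by the factor `c`. A bound `‖Xx‖ ≤ C‖x‖` gives this with
`c = C / √(1 + C²) < 1`, and conversely `‖P - Q‖ < 1`, tested on the vectors `(x, Xx)`, bounds `X`;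
since always `‖P - Q‖ ≤ 1`, the norm is `1` exactly when `X` is unbounded. Finally, invariance of
the graph under `B` gives `X (A₀x + VXx) = V*x + A₁Xx` for `x ∈ Dom X`, and pairing this with
`y ∈ Dom X*` is the weak Riccati equation.
-/

open scoped InnerProductSpace ComplexInnerProductSpace

section StarProjection

variable {𝕜 E : Type*} [RCLike 𝕜] [NormedAddCommGroup E] [InnerProductSpace 𝕜 E] [CompleteSpace E]
  {P : E →L[𝕜] E}

theorem IsStarProjection.norm_sub_starProjection_le (hP : IsStarProjection P)
    (L : Submodule 𝕜 E) [L.HasOrthogonalProjection] {c : ℝ} (hc : 0 ≤ c)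
    (hperp : ∀ f ∈ Lᗮ, ‖P f‖ ≤ c * ‖f‖) (hmem : ∀ f ∈ L, ‖f - P f‖ ≤ c * ‖f‖) :
    ‖P - L.starProjection‖ ≤ c := by
  refine ContinuousLinearMap.opNorm_le_bound _ hc fun f => ?_
  set g₁ := Lᗮ.starProjection f
  set g₂ := L.starProjection f
  have hf : f = g₂ + g₁ := (L.starProjection_add_starProjection_orthogonal f).symm
  have hsplit : (P - L.starProjection) f = P g₁ - (g₂ - P g₂) := by
    rw [sub_apply]
    nth_rw 1 [hf]
    rw [map_add]
    abel
  have horth : ⟪P g₁, g₂ - P g₂⟫_𝕜 = 0 := by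
    have hPP : P (P g₂) = P g₂ := DFunLike.congr_fun hP.isIdempotentElem.eq g₂
    rw [← ContinuousLinearMap.adjoint_inner_right, hP.isSelfAdjoint.adjoint_eq, map_sub, hPP,
      sub_self, inner_zero_right]
  have hsq : ‖(P - L.starProjection) f‖ ^ 2 ≤ (c * ‖f‖) ^ 2 :=
    calc ‖(P - L.starProjection) f‖ ^ 2 = ‖P g₁‖ ^ 2 + ‖g₂ - P g₂‖ ^ 2 := by
          rw [hsplit, @norm_sub_sq 𝕜, horth, map_zero, mul_zero, sub_zero]
      _ ≤ (c * ‖g₁‖) ^ 2 + (c * ‖g₂‖) ^ 2 := by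
          gcongr
          exacts [hperp _ (Lᗮ.starProjection_apply_mem f), hmem _ (L.starProjection_apply_mem f)]
      _ = (c * ‖f‖) ^ 2 := by
          rw [mul_pow, mul_pow, mul_pow, ← mul_add, L.norm_sq_eq_add_norm_sq_starProjection f,
            add_comm]
  exact (sq_le_sq₀ (norm_nonneg _) (by positivity)).mp hsq

theorem IsStarProjection.norm_sub_starProjection_le_one (hP : IsStarProjection P)
    (L : Submodule 𝕜 E) [L.HasOrthogonalProjection] : ‖P - L.starProjection‖ ≤ 1 := by
  obtain ⟨_, hPeq⟩ := isStarProjection_iff_eq_starProjection_range.mp hP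
  obtain ⟨_, hPeq'⟩ := isStarProjection_iff_eq_starProjection_range.mp hP.one_sub
  refine hP.norm_sub_starProjection_le L zero_le_one (fun f _ => ?_) (fun f _ => ?_)
  · rw [one_mul, hPeq]
    exact Submodule.norm_starProjection_apply_le _ f
  · have := Submodule.norm_starProjection_apply_le (1 - P).range f
    rwa [← hPeq', ← one_mul ‖f‖] at this

end StarProjection

theorem le_div_sqrt_one_add_sq_mul_sqrt {a b C : ℝ} (hC : 0 ≤ C) (ha : 0 ≤ a) (h : a ≤ C * b) :
    a ≤ C / √(1 + C ^ 2) * √(a ^ 2 + b ^ 2) := by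
  rw [div_mul_eq_mul_div, le_div_iff₀ (by positivity)]
  refine (sq_le_sq₀ (by positivity) (by positivity)).mp ?_
  rw [mul_pow, mul_pow, Real.sq_sqrt (by positivity), Real.sq_sqrt (by positivity)]
  nlinarith [mul_le_mul h h ha (le_trans ha h)]

theorem div_sqrt_one_add_sq_lt_one (C : ℝ) : C / √(1 + C ^ 2) < 1 := by
  rw [div_lt_one (by positivity)]
  exact (le_abs_self C).trans_lt (Real.lt_sqrt (abs_nonneg C) |>.mpr (by simp))

theorem le_div_sqrt_one_sub_sq_mul {a b c : ℝ} (ha : 0 ≤ a) (hb : 0 ≤ b) (hc : 0 ≤ c)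
    (hc1 : c < 1) (h : a ≤ c * √(b ^ 2 + a ^ 2)) : a ≤ c / √(1 - c ^ 2) * b := by
  have h1 : 0 < 1 - c ^ 2 := by nlinarith
  rw [div_mul_eq_mul_div, le_div_iff₀ (Real.sqrt_pos.mpr h1)]
  refine (sq_le_sq₀ (by positivity) (by positivity)).mp ?_
  have h2 := pow_le_pow_left₀ ha h 2
  rw [mul_pow, Real.sq_sqrt (by positivity)] at h2
  rw [mul_pow, mul_pow, Real.sq_sqrt h1.le]
  nlinarith

section GraphLp

variable {R H0 H1 : Type*} [Ring R] [AddCommGroup H0] [Module R H0] [AddCommGroup H1]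
  [Module R H1]

def LinearPMap.graphLp (p : ENNReal) (X : H0 →ₗ.[R] H1) : Submodule R (WithLp p (H0 × H1)) :=
  X.graph.map (WithLp.linearEquiv p R (H0 × H1)).symm.toLinearMap

variable {p : ENNReal}

namespace LinearPMap

variable (X : H0 →ₗ.[R] H1)

theorem mem_graphLp_iff {u : WithLp p (H0 × H1)} : u ∈ X.graphLp p ↔ WithLp.ofLp u ∈ X.graph :=
  Submodule.mem_map_equiv _

theorem toLp_mem_graphLp (x : X.domain) : WithLp.toLp p ((x : H0), X x) ∈ X.graphLp p :=
  X.mem_graphLp_iff.mpr (X.mem_graph x)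

theorem isClosed_graphLp_iff [TopologicalSpace H0] [TopologicalSpace H1] :
    _root_.IsClosed (X.graphLp p : Set (WithLp p (H0 × H1))) ↔
      _root_.IsClosed (X.graph : Set (H0 × H1)) := by
  have : (X.graphLp p : Set (WithLp p (H0 × H1))) =
      WithLp.prodContinuousLinearEquiv p R H0 H1 ⁻¹' X.graph :=
    Set.ext fun _ => X.mem_graphLp_iff
  rw [this]
  exact (WithLp.prodContinuousLinearEquiv p R H0 H1).toHomeomorph.isClosed_preimage

end LinearPMap

theorem Submodule.exists_eq_graphLp_iff (G : Submodule R (WithLp p (H0 × H1))) :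
    (∃ X : H0 →ₗ.[R] H1, G = X.graphLp p) ↔ ∀ u ∈ G, u.fst = 0 → u = 0 := by
  constructor
  · rintro ⟨X, rfl⟩ u hu hu0
    exact (WithLp.ext_iff p).mpr
      (Prod.ext hu0 (X.graph_fst_eq_zero_snd (X.mem_graphLp_iff.mp hu) hu0))
  · intro hG
    set Ĝ := G.comap (WithLp.linearEquiv p R (H0 × H1)).symm.toLinearMap
    have hgraph : Ĝ.toLinearPMap.graph = Ĝ := Ĝ.toLinearPMap_graph_eq fun v hv hv0 => by
      simpa using congrArg WithLp.snd (hG _ hv hv0)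
    refine ⟨Ĝ.toLinearPMap, ?_⟩
    ext u
    rw [LinearPMap.mem_graphLp_iff, hgraph]
    rfl

end GraphLp

section HilbertSum

variable {𝕜 H0 H1 : Type*} [RCLike 𝕜] [NormedAddCommGroup H0] [InnerProductSpace 𝕜 H0]
  [NormedAddCommGroup H1] [InnerProductSpace 𝕜 H1]

namespace LinearPMap

variable (X : H0 →ₗ.[𝕜] H1)

theorem mem_orthogonal_graphLp_iff {u : WithLp 2 (H0 × H1)} :
    u ∈ (X.graphLp 2)ᗮ ↔ ∀ x : X.domain, ⟪(x : H0), u.fst⟫_𝕜 + ⟪X x, u.snd⟫_𝕜 = 0 := by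
  refine ⟨fun hu x => hu _ (X.toLp_mem_graphLp x), fun hu v hv => ?_⟩
  obtain ⟨x, hx, hXx⟩ := X.mem_graph_iff.mp (X.mem_graphLp_iff.mp hv)
  rw [WithLp.prod_inner_apply, ← hx, ← hXx]
  exact hu x

theorem dense_domain_iff_orthogonal_graphLp [CompleteSpace H0] :
    Dense (X.domain : Set H0) ↔ ∀ u ∈ (X.graphLp 2)ᗮ, u.snd = 0 → u = 0 := by
  have htoLp (w : H0) : WithLp.toLp 2 (w, (0 : H1)) ∈ (X.graphLp 2)ᗮ ↔ w ∈ X.domainᗮ := by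
    rw [mem_orthogonal_graphLp_iff, Submodule.mem_orthogonal]
    simp
  rw [Submodule.dense_iff_topologicalClosure_eq_top, Submodule.topologicalClosure_eq_top_iff,
    Submodule.eq_bot_iff]
  constructor
  · intro h u hu hu0
    have hu' : u = WithLp.toLp 2 (u.fst, 0) := (WithLp.ext_iff 2).mpr (Prod.ext rfl hu0)
    have hfst : u.fst = 0 := h _ ((htoLp _).mp (hu' ▸ hu))
    rw [hu', hfst]
    rfl
  · intro h w hw
    simpa using congrArg WithLp.fst (h _ ((htoLp w).mpr hw) rfl)

theorem norm_fst_le_of_mem_orthogonal_graphLp (hX : Dense (X.domain : Set H0)) {C : ℝ}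
    (hC0 : 0 ≤ C) (hC : ∀ x : X.domain, ‖X x‖ ≤ C * ‖(x : H0)‖) {u : WithLp 2 (H0 × H1)}
    (hu : u ∈ (X.graphLp 2)ᗮ) : ‖u.fst‖ ≤ C * ‖u.snd‖ := by
  have hbound (z : H0) : ‖⟪z, u.fst⟫_𝕜‖ ≤ C * ‖u.snd‖ * ‖z‖ := by
    refine hX.induction (fun z hz => ?_) (isClosed_le (by fun_prop) (by fun_prop)) z
    have h := (X.mem_orthogonal_graphLp_iff.mp hu) ⟨z, hz⟩
    rw [add_eq_zero_iff_eq_neg.mp h, norm_neg]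
    calc ‖⟪X ⟨z, hz⟩, u.snd⟫_𝕜‖ ≤ ‖X ⟨z, hz⟩‖ * ‖u.snd‖ := norm_inner_le_norm _ _
      _ ≤ C * ‖z‖ * ‖u.snd‖ := by gcongr; exact hC _
      _ = C * ‖u.snd‖ * ‖z‖ := by ring
  have h := hbound u.fst
  rw [inner_self_eq_norm_sq_to_K, norm_pow, RCLike.norm_ofReal, abs_norm, sq] at h
  rcases (norm_nonneg u.fst).eq_or_lt with h0 | hpos
  · rw [← h0]; positivity
  · exact le_of_mul_le_mul_right h hpos

end LinearPMap

variable {P : WithLp 2 (H0 × H1) →L[𝕜] WithLp 2 (H0 × H1)}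

theorem IsStarProjection.apply_eq_toLp_fst_of_range_eq [CompleteSpace H0] [CompleteSpace H1]
    (hP : IsStarProjection P)
    (hran : LinearMap.range (P : WithLp 2 (H0 × H1) →ₗ[𝕜] WithLp 2 (H0 × H1)) =
      ((⊤ : Submodule 𝕜 H0).prod (⊥ : Submodule 𝕜 H1)).map
        (WithLp.linearEquiv 2 𝕜 (H0 × H1)).symm.toLinearMap)
    (u : WithLp 2 (H0 × H1)) : P u = WithLp.toLp 2 (u.fst, 0) := by
  obtain ⟨_, hPeq⟩ := isStarProjection_iff_eq_starProjection_range.mp hP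
  rw [hPeq]
  refine Submodule.eq_starProjection_of_mem_of_inner_eq_zero ?_ fun w hw => ?_
  · rw [hran]
    exact ⟨(u.fst, 0), Submodule.mem_prod.mpr ⟨trivial, rfl⟩, rfl⟩
  · rw [hran] at hw
    obtain ⟨⟨a, b⟩, hab, rfl⟩ := hw
    obtain rfl : b = 0 := (Submodule.mem_bot 𝕜).mp (Submodule.mem_prod.mp hab).2
    simp

theorem setOf_apply_eq_zero_and_starProjection_eq_self_eq_singleton_zero_iff
    (hP : ∀ u, P u = WithLp.toLp 2 (u.fst, 0)) (L : Submodule 𝕜 (WithLp 2 (H0 × H1)))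
    [L.HasOrthogonalProjection] :
    {f | P f = 0 ∧ L.starProjection f = f} = {0} ↔ ∀ u ∈ L, u.fst = 0 → u = 0 := by
  have hP0 (f : WithLp 2 (H0 × H1)) : P f = 0 ↔ f.fst = 0 := by
    simp only [hP, WithLp.toLp_eq_zero, Prod.mk_eq_zero, and_true]
  rw [Set.eq_singleton_iff_unique_mem]
  exact ⟨fun h u hu hu0 => h.2 u ⟨(hP0 u).mpr hu0, L.starProjection_eq_self_iff.mpr hu⟩,
    fun h => ⟨⟨map_zero P, map_zero _⟩,
      fun u hu => h u (L.starProjection_eq_self_iff.mp hu.2) ((hP0 u).mp hu.1)⟩⟩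

theorem setOf_apply_eq_self_and_starProjection_eq_zero_eq_singleton_zero_iff
    (hP : ∀ u, P u = WithLp.toLp 2 (u.fst, 0)) (L : Submodule 𝕜 (WithLp 2 (H0 × H1)))
    [L.HasOrthogonalProjection] :
    {f | P f = f ∧ L.starProjection f = 0} = {0} ↔ ∀ u ∈ Lᗮ, u.snd = 0 → u = 0 := by
  have hPf (f : WithLp 2 (H0 × H1)) : P f = f ↔ f.snd = 0 := by
    simp only [hP, WithLp.ext_iff 2, Prod.ext_iff, WithLp.ofLp_fst, WithLp.ofLp_snd, true_and,
      eq_comm]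
  rw [Set.eq_singleton_iff_unique_mem]
  exact ⟨fun h u hu hu0 => h.2 u ⟨(hPf u).mpr hu0, L.starProjection_apply_eq_zero_iff.mpr hu⟩,
    fun h => ⟨⟨map_zero P, map_zero _⟩,
      fun u hu => h u (L.starProjection_apply_eq_zero_iff.mp hu.2) ((hPf u).mp hu.1)⟩⟩

theorem norm_sub_starProjection_graphLp_lt_one_iff [CompleteSpace H0] [CompleteSpace H1]
    (hPs : IsStarProjection P) (hP : ∀ u, P u = WithLp.toLp 2 (u.fst, 0))
    {X : H0 →ₗ.[𝕜] H1} [(X.graphLp 2).HasOrthogonalProjection] (hX : Dense (X.domain : Set H0)) :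
    ‖P - (X.graphLp 2).starProjection‖ < 1 ↔ ∃ C : ℝ, ∀ x : X.domain, ‖X x‖ ≤ C * ‖(x : H0)‖ := by
  constructor
  · intro h
    set c := ‖P - (X.graphLp 2).starProjection‖
    refine ⟨c / √(1 - c ^ 2), fun x =>
      le_div_sqrt_one_sub_sq_mul (norm_nonneg _) (norm_nonneg _) (norm_nonneg _) h ?_⟩
    have hf : (P - (X.graphLp 2).starProjection) (WithLp.toLp 2 ((x : H0), X x)) =
        WithLp.toLp 2 (0, -X x) := by
      rw [sub_apply, hP, Submodule.starProjection_eq_self_iff.mpr (X.toLp_mem_graphLp x),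
        ← WithLp.toLp_sub, Prod.mk_sub_mk, WithLp.toLp_fst, sub_self, zero_sub]
    calc ‖X x‖ = ‖(P - (X.graphLp 2).starProjection) (WithLp.toLp 2 ((x : H0), X x))‖ := by
          rw [hf, WithLp.norm_toLp_snd, norm_neg]
      _ ≤ c * ‖WithLp.toLp 2 ((x : H0), X x)‖ := ContinuousLinearMap.le_opNorm _ _
      _ = c * √(‖(x : H0)‖ ^ 2 + ‖X x‖ ^ 2) := by rw [WithLp.prod_norm_eq_of_L2]; rfl
  · rintro ⟨C, hC⟩
    have hC0 : 0 ≤ max C 0 := le_max_right _ _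
    have hC' (x : X.domain) : ‖X x‖ ≤ max C 0 * ‖(x : H0)‖ :=
      (hC x).trans (by gcongr; exact le_max_left _ _)
    refine (hPs.norm_sub_starProjection_le _ (by positivity) (fun f hf => ?_)
      (fun f hf => ?_)).trans_lt (div_sqrt_one_add_sq_lt_one (max C 0))
    · rw [hP, WithLp.norm_toLp_fst, WithLp.prod_norm_eq_of_L2]
      exact le_div_sqrt_one_add_sq_mul_sqrt hC0 (norm_nonneg _)
        (X.norm_fst_le_of_mem_orthogonal_graphLp hX hC0 hC' hf)
    · obtain ⟨x, hx, hXx⟩ := X.mem_graph_iff.mp (X.mem_graphLp_iff.mp hf)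
      have hfP : f - P f = WithLp.toLp 2 (0, f.snd) := by
        rw [hP]
        exact (WithLp.ext_iff 2).mpr (Prod.ext (sub_self f.fst) (sub_zero f.snd))
      rw [hfP, WithLp.norm_toLp_snd, WithLp.prod_norm_eq_of_L2, add_comm (‖f.fst‖ ^ 2)]
      refine le_div_sqrt_one_add_sq_mul_sqrt hC0 (norm_nonneg _) ?_
      rw [← WithLp.ofLp_fst, ← WithLp.ofLp_snd, ← hx, ← hXx]
      exact hC' x

namespace LinearPMap

variable [CompleteSpace H0] [CompleteSpace H1]

def IsWeakRiccatiSolution (A0 : H0 →L[𝕜] H0) (A1 : H1 →L[𝕜] H1) (V : H1 →L[𝕜] H0)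
    (X : H0 →ₗ.[𝕜] H1) : Prop :=
  ∀ (x : X.domain) (y : X.adjoint.domain),
    ⟪A1 (y : H1), X x⟫_𝕜 - ⟪X.adjoint y, A0 (x : H0)⟫_𝕜 - ⟪X.adjoint y, V (X x)⟫_𝕜
      + ⟪V (y : H1), (x : H0)⟫_𝕜 = 0

theorem isWeakRiccatiSolution_of_forall_mem_graphLp {A0 : H0 →L[𝕜] H0} {A1 : H1 →L[𝕜] H1}
    {V : H1 →L[𝕜] H0} (hA1 : IsSelfAdjoint A1) {B : WithLp 2 (H0 × H1) →L[𝕜] WithLp 2 (H0 × H1)}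
    (hB : ∀ u : WithLp 2 (H0 × H1),
      WithLp.equiv 2 (H0 × H1) (B u) =
        (A0 (WithLp.equiv 2 (H0 × H1) u).1 + V (WithLp.equiv 2 (H0 × H1) u).2,
         ContinuousLinearMap.adjoint V (WithLp.equiv 2 (H0 × H1) u).1
           + A1 (WithLp.equiv 2 (H0 × H1) u).2))
    {X : H0 →ₗ.[𝕜] H1} (hX : Dense (X.domain : Set H0))
    (hinv : ∀ u ∈ X.graphLp 2, B u ∈ X.graphLp 2) : X.IsWeakRiccatiSolution A0 A1 V := by
  intro x y
  have hBu := X.mem_graphLp_iff.mp (hinv _ (X.toLp_mem_graphLp x))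
  rw [← WithLp.equiv_apply, hB] at hBu
  obtain ⟨x', hx', hXx'⟩ := X.mem_graph_iff.mp hBu
  simp only [WithLp.equiv_apply] at hx' hXx'
  have key : ⟪X.adjoint y, A0 (x : H0)⟫_𝕜 + ⟪X.adjoint y, V (X x)⟫_𝕜
      = ⟪V (y : H1), (x : H0)⟫_𝕜 + ⟪A1 (y : H1), X x⟫_𝕜 := by
    rw [← inner_add_right, ← hx', (adjoint_isFormalAdjoint hX) y x', hXx', inner_add_right,
      ContinuousLinearMap.adjoint_inner_right, ← ContinuousLinearMap.adjoint_inner_left,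
      hA1.adjoint_eq]
  linear_combination -key

end LinearPMap

end HilbertSum

theorem norm_sub_proj_eq_one_iff_graph_of_unbounded_riccati_solution_general
    {H0 H1 : Type*}
    [NormedAddCommGroup H0] [InnerProductSpace ℂ H0] [CompleteSpace H0]
    [NormedAddCommGroup H1] [InnerProductSpace ℂ H1] [CompleteSpace H1]
    (A0 : H0 →L[ℂ] H0) (A1 : H1 →L[ℂ] H1) (V : H1 →L[ℂ] H0)
    (hA1 : IsSelfAdjoint A1)
    (B : WithLp 2 (H0 × H1) →L[ℂ] WithLp 2 (H0 × H1))
    (hB : ∀ u : WithLp 2 (H0 × H1),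
      WithLp.equiv 2 (H0 × H1) (B u) =
        (A0 (WithLp.equiv 2 (H0 × H1) u).1 + V (WithLp.equiv 2 (H0 × H1) u).2,
         ContinuousLinearMap.adjoint V (WithLp.equiv 2 (H0 × H1) u).1
           + A1 (WithLp.equiv 2 (H0 × H1) u).2))
    (G : Submodule ℂ (WithLp 2 (H0 × H1)))
    (hGclosed : IsClosed (G : Set (WithLp 2 (H0 × H1))))
    (hGinv : ∀ u ∈ G, B u ∈ G)
    (P Q : WithLp 2 (H0 × H1) →L[ℂ] WithLp 2 (H0 × H1))
    (hP : IsIdempotentElem P) (hPsa : IsSelfAdjoint P)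
    (hQ : IsIdempotentElem Q) (hQsa : IsSelfAdjoint Q)
    (hPran : LinearMap.range (P : WithLp 2 (H0 × H1) →ₗ[ℂ] WithLp 2 (H0 × H1)) =
      ((⊤ : Submodule ℂ H0).prod (⊥ : Submodule ℂ H1)).map
        (WithLp.linearEquiv 2 ℂ (H0 × H1)).symm.toLinearMap)
    (hQran : LinearMap.range (Q : WithLp 2 (H0 × H1) →ₗ[ℂ] WithLp 2 (H0 × H1)) = G) :
    (‖P - Q‖ = 1 ∧
      {f : WithLp 2 (H0 × H1) | P f = f ∧ Q f = 0} = {0} ∧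
      {f : WithLp 2 (H0 × H1) | P f = 0 ∧ Q f = f} = {0}) ↔
    ∃ X : H0 →ₗ.[ℂ] H1,
      Dense (X.domain : Set H0) ∧
      IsClosed (X.graph : Set (H0 × H1)) ∧
      -- `X` is unbounded, i.e., not norm-continuous on its domain
      (¬ ∃ C : ℝ, ∀ x : X.domain, ‖X x‖ ≤ C * ‖(x : H0)‖) ∧
      -- `X` is a weak solution of the Riccati equation
      (∀ (x : X.domain) (y : X.adjoint.domain),
        ⟪A1 (y : H1), X x⟫ - ⟪X.adjoint y, A0 (x : H0)⟫ - ⟪X.adjoint y, V (X x)⟫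
          + ⟪V (y : H1), (x : H0)⟫ = 0) ∧
      G = X.graph.map (WithLp.linearEquiv 2 ℂ (H0 × H1)).symm.toLinearMap := by
  have hPs : IsStarProjection P := ⟨hP, hPsa⟩
  have hPapply := hPs.apply_eq_toLp_fst_of_range_eq hPran
  have : CompleteSpace G := hGclosed.completeSpace_coe
  obtain rfl : Q = G.starProjection :=
    ContinuousLinearMap.IsStarProjection.ext ⟨hQ, hQsa⟩ isStarProjection_starProjection
      (by rw [hQran, Submodule.range_starProjection])
  rw [setOf_apply_eq_self_and_starProjection_eq_zero_eq_singleton_zero_iff hPapply,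
    setOf_apply_eq_zero_and_starProjection_eq_self_eq_singleton_zero_iff hPapply]
  constructor
  · rintro ⟨hnorm, hM10, hM01⟩
    obtain ⟨X, rfl⟩ := G.exists_eq_graphLp_iff.mpr hM01
    have hX := X.dense_domain_iff_orthogonal_graphLp.mpr hM10
    exact ⟨X, hX, X.isClosed_graphLp_iff.mp hGclosed,
      fun hbdd => ((norm_sub_starProjection_graphLp_lt_one_iff hPs hPapply hX).mpr hbdd).ne hnorm,
      X.isWeakRiccatiSolution_of_forall_mem_graphLp hA1 hB hX hGinv, rfl⟩
  · rintro ⟨X, hX, -, hunb, -, hG⟩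
    obtain rfl : G = X.graphLp 2 := hG
    refine ⟨le_antisymm (hPs.norm_sub_starProjection_le_one _) (not_lt.mp fun h => hunb
        ((norm_sub_starProjection_graphLp_lt_one_iff hPs hPapply hX).mp h)),
      X.dense_domain_iff_orthogonal_graphLp.mp hX, (Submodule.exists_eq_graphLp_iff _).mp ⟨X, rfl⟩⟩

/-- Let `G` be a closed `B`-invariant subspace of `H = H₀ ⊕ H₁`, let `P` be the
orthogonal projection onto `H₀ ⊕ {0}` and `Q` the orthogonal projection onto `G`.  Then
`‖P - Q‖ = 1` together with `M₁₀(P,Q) = M₀₁(P,Q) = {0}` holds iff `G` is the graph of a closed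
densely defined unbounded operator `X : H₀ → H₁` which is a weak solution of the Riccati
equation `A₁ X - X A₀ - X V X + V* = 0`. -/
theorem norm_sub_proj_eq_one_iff_graph_of_unbounded_riccati_solution
    {H0 H1 : Type*}
    [NormedAddCommGroup H0] [InnerProductSpace ℂ H0] [CompleteSpace H0]
    [TopologicalSpace.SeparableSpace H0]
    [NormedAddCommGroup H1] [InnerProductSpace ℂ H1] [CompleteSpace H1]
    [TopologicalSpace.SeparableSpace H1]
    (A0 : H0 →L[ℂ] H0) (A1 : H1 →L[ℂ] H1) (V : H1 →L[ℂ] H0)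
    (hA0 : IsSelfAdjoint A0) (hA1 : IsSelfAdjoint A1)
    (B : WithLp 2 (H0 × H1) →L[ℂ] WithLp 2 (H0 × H1))
    (hB : ∀ u : WithLp 2 (H0 × H1),
      WithLp.equiv 2 (H0 × H1) (B u) =
        (A0 (WithLp.equiv 2 (H0 × H1) u).1 + V (WithLp.equiv 2 (H0 × H1) u).2,
         ContinuousLinearMap.adjoint V (WithLp.equiv 2 (H0 × H1) u).1
           + A1 (WithLp.equiv 2 (H0 × H1) u).2))
    (G : Submodule ℂ (WithLp 2 (H0 × H1)))
    (hGclosed : IsClosed (G : Set (WithLp 2 (H0 × H1))))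
    (hGinv : ∀ u ∈ G, B u ∈ G)
    (P Q : WithLp 2 (H0 × H1) →L[ℂ] WithLp 2 (H0 × H1))
    (hP : IsIdempotentElem P) (hPsa : IsSelfAdjoint P)
    (hQ : IsIdempotentElem Q) (hQsa : IsSelfAdjoint Q)
    (hPran : LinearMap.range (P : WithLp 2 (H0 × H1) →ₗ[ℂ] WithLp 2 (H0 × H1)) =
      ((⊤ : Submodule ℂ H0).prod (⊥ : Submodule ℂ H1)).map
        (WithLp.linearEquiv 2 ℂ (H0 × H1)).symm.toLinearMap)
    (hQran : LinearMap.range (Q : WithLp 2 (H0 × H1) →ₗ[ℂ] WithLp 2 (H0 × H1)) = G) :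
    (‖P - Q‖ = 1 ∧
      {f : WithLp 2 (H0 × H1) | P f = f ∧ Q f = 0} = {0} ∧
      {f : WithLp 2 (H0 × H1) | P f = 0 ∧ Q f = f} = {0}) ↔
    ∃ X : H0 →ₗ.[ℂ] H1,
      Dense (X.domain : Set H0) ∧
      IsClosed (X.graph : Set (H0 × H1)) ∧
      -- `X` is unbounded, i.e., not norm-continuous on its domain
      (¬ ∃ C : ℝ, ∀ x : X.domain, ‖X x‖ ≤ C * ‖(x : H0)‖) ∧
      -- `X` is a weak solution of the Riccati equation
      (∀ (x : X.domain) (y : X.adjoint.domain),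
        ⟪A1 (y : H1), X x⟫ - ⟪X.adjoint y, A0 (x : H0)⟫ - ⟪X.adjoint y, V (X x)⟫
          + ⟪V (y : H1), (x : H0)⟫ = 0) ∧
      G = X.graph.map (WithLp.linearEquiv 2 ℂ (H0 × H1)).symm.toLinearMap :=
  norm_sub_proj_eq_one_iff_graph_of_unbounded_riccati_solution_general A0 A1 V hA1 B hB G hGclosed
    hGinv P Q hP hPsa hQ hQsa hPran hQran
end

section
/- Let X : H0 -> H1 be a contractive solution of the Riccati equation such that the orthogonal projection Q onto G(H0,X) commutes with the orthogonal projection onto every closed B-invariant subspace of H. Let S denote the set of all contractive solutions of the Riccati equation. Then the map T_X defined on S by T_X(Y) = Ker(I + Y*X) is injective, and its range equals R, the set of all closed subspaces L of H0 such that L ⊆ Ker(I - X*X) ∩ Ker(X V X - V*) and L reduces both A0 and V X. -/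
/-!
Put `G = X†X`. For a contractive solution `Y` the graph of `Y` is a closed `B`-invariant
subspace, so its orthogonal projection commutes with `Q`. Projecting `x ⊕ X x` onto it splits
`x = n + l` with `Y n = X n` and `l ∈ L = Ker (I + Y† X)`. Contractivity forces `G = I` and
`Y = -X` on `L`, hence `n ⊥ L`, and so `Y = X (I - 2 P_L)`: the solution is determined by `L`.

Conversely, if `G = I` on a closed subspace `L` with projection `P`, then `Y = X (I - 2 P)` is a
contraction with `Ker (I + Y† X) = L`, and comparing the Riccati equations of `X` and `Y` shows
that `Y` is a solution iff `P` commutes with `A₀` and `V X` and `X V X = V*` on `L`. For the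
hard direction one also needs that `(I + W† W)(A₀ + V W)` is self-adjoint for every solution
`W`, and that `I + G` is injective; what remains is a computation in the ring of operators.
-/

open ContinuousLinearMap Submodule
open scoped InnerProductSpace

section StarRing

variable {R : Type*} [Ring R]

lemma mul_sub_mul_add_mul_mul_one_sub_two_nsmul {P A M : R} (hP : IsIdempotentElem P)
    (hA : Commute P A) (hM : Commute P M) :
    P * A - A * P + P * M * (1 - 2 • P) = -(M * P) := by
  have hPP' (T : R) : P * (P * T) = P * T := by rw [← mul_assoc, hP.eq]
  linear_combination (norm := noncomm_ring [hP.eq, hPP']) hA.eq + hM.eq * (1 - 2 • P)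

lemma one_sub_two_nsmul_mul_mul_one_sub_two_nsmul {P G : R} (hP : IsIdempotentElem P)
    (hGP : G * P = P) (hPG : P * G = P) : (1 - 2 • P) * G * (1 - 2 • P) = G := by
  have hPP' (T : R) : P * (P * T) = P * T := by rw [← mul_assoc, hP.eq]
  have hGP' (T : R) : G * (P * T) = P * T := by rw [← mul_assoc, hGP]
  have hPG' (T : R) : P * (G * T) = P * T := by rw [← mul_assoc, hPG]
  noncomm_ring [hP.eq, hPP', hGP, hGP', hPG, hPG']

variable [StarRing R]

lemma IsSelfAdjoint.of_nsmul [IsAddTorsionFree R] {n : ℕ} (hn : n ≠ 0) {x : R}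
    (hx : IsSelfAdjoint (n • x)) : IsSelfAdjoint x := by
  refine nsmul_right_injective hn ?_
  change n • star x = n • x
  rw [← star_nsmul]
  exact hx.star_eq

lemma IsSelfAdjoint.mul_eq_self_of_mul_eq_self {P G : R} (hP : IsSelfAdjoint P)
    (hG : IsSelfAdjoint G) (hGP : G * P = P) : P * G = P := by
  simpa [star_mul, hP.star_eq, hG.star_eq] using congrArg star hGP

/-- The operator identity behind the hard direction, with `G = X† X`, `M = V X` and `P` the
projection onto `L`: `hE` is `X†` applied to the difference of the Riccati equations of `X` and
`Y = X (1 - 2 P)`, while `hAM` and `hAMP` express the self-adjointness of `B` on their graphs. -/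
theorem commute_of_isSelfAdjoint_mul_of_eq_zero [IsAddTorsionFree R] {P A M G : R}
    (hP : IsStarProjection P) (hA : IsSelfAdjoint A) (hG : IsSelfAdjoint G) (hGP : G * P = P)
    (hcancel : ∀ T : R, (1 + G) * T = 0 → T = 0)
    (hAM : IsSelfAdjoint ((1 + G) * (A + M)))
    (hAMP : IsSelfAdjoint ((1 + G) * (A + M * (1 - 2 • P))))
    (hE : G * (P * A - A * P + P * M * (1 - 2 • P)) + star M * P = 0) :
    Commute P A ∧ Commute P M := by
  have hPP : P * P = P := hP.isIdempotentElem.eq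
  have hPs : star P = P := hP.isSelfAdjoint.star_eq
  have hPG : P * G = P := hP.isSelfAdjoint.mul_eq_self_of_mul_eq_self hG hGP
  have hPP' (T : R) : P * (P * T) = P * T := by rw [← mul_assoc, hPP]
  have hGP' (T : R) : G * (P * T) = P * T := by rw [← mul_assoc, hGP]
  have hPG' (T : R) : P * (G * T) = P * T := by rw [← mul_assoc, hPG]
  have hS : star ((1 + G) * M * P) = (1 + G) * M * P := by
    refine IsSelfAdjoint.of_nsmul two_ne_zero ?_
    convert hAM.sub hAMP using 1
    noncomm_ring
  simp only [star_mul, star_add, star_one, hPs, hG.star_eq] at hS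
  have hMP : (1 - P) * M * P = 0 := by
    apply hcancel
    linear_combination (norm := noncomm_ring [hPP, hPP', hGP, hGP', hPG, hPG']) -(1 - P) * hS
  have hPAM : P * A * (1 - P) + P * M * (1 - P) = 0 := by
    linear_combination (norm := noncomm_ring [hPP, hPP', hGP, hGP', hPG, hPG']) hE * (1 - P)
  have hMA : (1 - P) * star M * P = (1 - P) * G * A * P := by
    linear_combination (norm := noncomm_ring [hPP, hPP', hGP, hGP', hPG, hPG']) (1 - P) * hE * P
  have hAP : (1 - P) * A * P = 0 := by
    apply hcancel
    have h := congrArg star hPAM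
    simp only [star_mul, star_add, star_sub, star_one, star_zero, hPs, hA.star_eq] at h
    linear_combination (norm := noncomm_ring [hPP, hPP', hGP, hGP', hPG, hPG']) h - hMA
  have hPA : P * A = A * P := by
    have h := congrArg star hAP
    simp only [star_mul, star_sub, star_one, star_zero, hPs, hA.star_eq] at h
    linear_combination (norm := noncomm_ring [hPP, hPP']) h - hAP
  refine ⟨hPA, ?_⟩
  change P * M = M * P
  linear_combination (norm := noncomm_ring [hPP, hPP']) hPAM - hPA * (1 - P) - hMP

end StarRing

section Graph

variable {𝕜 E F : Type*} [RCLike 𝕜] [NormedAddCommGroup E] [NormedSpace 𝕜 E]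
  [NormedAddCommGroup F] [NormedSpace 𝕜 F]

def graphSubspace (T : E →L[𝕜] F) : Submodule 𝕜 (WithLp 2 (E × F)) :=
  (LinearMap.graph T.toLinearMap).map (WithLp.linearEquiv 2 𝕜 (E × F)).symm.toLinearMap

lemma mem_graphSubspace_iff {T : E →L[𝕜] F} {u : WithLp 2 (E × F)} :
    u ∈ graphSubspace T ↔ T u.fst = u.snd := by
  constructor
  · rintro ⟨v, hv, rfl⟩
    exact ((LinearMap.mem_graph_iff _ _).mp hv).symm
  · intro h
    exact ⟨WithLp.ofLp u, (LinearMap.mem_graph_iff _ _).mpr h.symm, rfl⟩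

lemma isClosed_graphSubspace (T : E →L[𝕜] F) :
    IsClosed (graphSubspace T : Set (WithLp 2 (E × F))) := by
  have h : (graphSubspace T : Set (WithLp 2 (E × F))) = {u | T u.fst = u.snd} := by
    ext u
    exact mem_graphSubspace_iff
  rw [h]
  exact isClosed_eq (T.continuous.comp (WithLp.continuous_fst 2 E F))
    (WithLp.continuous_snd 2 E F)

instance [CompleteSpace E] [CompleteSpace F] (T : E →L[𝕜] F) :
    CompleteSpace (graphSubspace T) :=
  (isClosed_graphSubspace T).completeSpace_coe

end Graph

section HilbertSpace

variable {𝕜 E F : Type*} [RCLike 𝕜] [NormedAddCommGroup E] [InnerProductSpace 𝕜 E]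
  [NormedAddCommGroup F] [InnerProductSpace 𝕜 F]

section StarProjection

variable {L : Submodule 𝕜 E} [L.HasOrthogonalProjection]

lemma norm_comp_one_sub_two_smul_starProjection_le (X : E →L[𝕜] F) :
    ‖X ∘L (1 - 2 • L.starProjection : E →L[𝕜] E)‖ ≤ ‖X‖ := by
  have hU : (1 - 2 • L.starProjection : E →L[𝕜] E) =
      -((L.reflection : E ≃L[𝕜] E) : E →L[𝕜] E) := by
    ext x
    simp [reflection_apply]
  calc ‖X ∘L (1 - 2 • L.starProjection : E →L[𝕜] E)‖
      ≤ ‖X‖ * ‖(1 - 2 • L.starProjection : E →L[𝕜] E)‖ := opNorm_comp_le _ _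
    _ ≤ ‖X‖ * 1 := by
        rw [hU, norm_neg]
        gcongr
        exact L.reflection.toLinearIsometry.norm_toContinuousLinearMap_le
    _ = ‖X‖ := mul_one _

lemma le_ker_sub_iff_comp_starProjection_eq {S T : E →L[𝕜] F} :
    L ≤ LinearMap.ker (S - T).toLinearMap ↔ S ∘L L.starProjection = T ∘L L.starProjection := by
  constructor
  · intro h
    ext x
    exact sub_eq_zero.mp (h (L.starProjection_apply_mem x))
  · intro h l hl
    have hl' := congrArg (· l) h
    simp only [comp_apply, starProjection_eq_self_iff.mpr hl] at hl'
    exact sub_eq_zero.mpr hl'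

lemma commute_starProjection_iff {T : E →L[𝕜] E} :
    Commute L.starProjection T ↔ L.map T.toLinearMap ≤ L ∧ Lᗮ.map T.toLinearMap ≤ Lᗮ := by
  rw [IsIdempotentElem.commute_iff L.isIdempotentElem_starProjection, range_starProjection,
    ker_starProjection, Module.End.mem_invtSubmodule_iff_map_le,
    Module.End.mem_invtSubmodule_iff_map_le]

end StarProjection

variable [CompleteSpace E] [CompleteSpace F]

lemma range_mem_invtSubmodule_starProjection {Q B : E →L[𝕜] E} (hQ : IsIdempotentElem Q)
    (hQcomm : ∀ R : E →L[𝕜] E, IsIdempotentElem R → IsSelfAdjoint R →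
      (∀ u ∈ LinearMap.range R.toLinearMap, B u ∈ LinearMap.range R.toLinearMap) → Q * R = R * Q)
    {K : Submodule 𝕜 E} [K.HasOrthogonalProjection] (hK : ∀ u ∈ K, B u ∈ K) :
    LinearMap.range Q.toLinearMap ∈ Module.End.invtSubmodule K.starProjection.toLinearMap := by
  have hR := isStarProjection_starProjection (U := K)
  refine ((IsIdempotentElem.commute_iff hQ).mp
    (hQcomm _ hR.isIdempotentElem hR.isSelfAdjoint ?_)).1
  rwa [range_starProjection]

section Contraction

lemma adjoint_apply_apply_eq_of_norm_apply_eq {T : E →L[𝕜] F} (hT : ‖T‖ ≤ 1) {u : E}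
    (hu : ‖T u‖ = ‖u‖) : adjoint T (T u) = u := by
  have hle : ‖adjoint T (T u)‖ ≤ ‖u‖ :=
    calc ‖adjoint T (T u)‖ ≤ ‖adjoint T‖ * ‖T u‖ := le_opNorm _ _
      _ ≤ 1 * ‖u‖ := by rw [adjoint.norm_map, hu]; gcongr
      _ = ‖u‖ := one_mul _
  have hre : RCLike.re ⟪adjoint T (T u), u⟫_𝕜 = ‖u‖ ^ 2 := by
    rw [adjoint_inner_left, inner_self_eq_norm_sq, hu]
  have hsq : ‖adjoint T (T u) - u‖ ^ 2 ≤ 0 := by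
    rw [norm_sub_sq (𝕜 := 𝕜), hre]
    nlinarith [norm_nonneg (adjoint T (T u)), norm_nonneg u]
  rw [← sub_eq_zero, ← norm_eq_zero]
  nlinarith [norm_nonneg (adjoint T (T u) - u)]

lemma eq_zero_of_adjoint_apply_apply_eq_neg (T : E →L[𝕜] F) {q : E}
    (hq : adjoint T (T q) = -q) : q = 0 := by
  have h : ‖T q‖ ^ 2 = -‖q‖ ^ 2 := by
    rw [apply_norm_sq_eq_inner_adjoint_left, comp_apply, hq, inner_neg_left, map_neg,
      inner_self_eq_norm_sq]
  rw [← norm_eq_zero]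
  nlinarith [sq_nonneg ‖T q‖, sq_nonneg ‖q‖, norm_nonneg q]

lemma eq_zero_of_one_add_adjoint_comp_self_mul_eq_zero (T : E →L[𝕜] F) {S : E →L[𝕜] E}
    (h : (1 + adjoint T ∘L T) * S = 0) : S = 0 := by
  ext x
  apply eq_zero_of_adjoint_apply_apply_eq_neg T
  have hx : S x + adjoint T (T (S x)) = 0 := by simpa using congrArg (· x) h
  exact eq_neg_of_add_eq_zero_right hx

variable {X Y : E →L[𝕜] F}

lemma norm_apply_eq_of_adjoint_apply_apply_eq_neg (hX : ‖X‖ ≤ 1) (hY : ‖Y‖ ≤ 1) {l : E}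
    (hl : adjoint Y (X l) = -l) : ‖X l‖ = ‖l‖ := by
  refine le_antisymm ?_ ?_
  · simpa using X.le_of_opNorm_le hX l
  · have hY' : ‖adjoint Y‖ ≤ 1 := by rwa [adjoint.norm_map]
    calc ‖l‖ = ‖adjoint Y (X l)‖ := by rw [hl, norm_neg]
      _ ≤ ‖X l‖ := by simpa using (adjoint Y).le_of_opNorm_le hY' (X l)

lemma adjoint_apply_apply_eq_of_adjoint_apply_apply_eq_neg (hX : ‖X‖ ≤ 1) (hY : ‖Y‖ ≤ 1)
    {l : E} (hl : adjoint Y (X l) = -l) : adjoint X (X l) = l :=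
  adjoint_apply_apply_eq_of_norm_apply_eq hX
    (norm_apply_eq_of_adjoint_apply_apply_eq_neg hX hY hl)

lemma apply_eq_neg_of_adjoint_apply_apply_eq_neg (hX : ‖X‖ ≤ 1) (hY : ‖Y‖ ≤ 1) {l : E}
    (hl : adjoint Y (X l) = -l) : Y l = -X l := by
  have h := adjoint_apply_apply_eq_of_norm_apply_eq (T := adjoint Y)
    (by rwa [adjoint.norm_map]) (u := X l)
    (by rw [hl, norm_neg, norm_apply_eq_of_adjoint_apply_apply_eq_neg hX hY hl])
  rw [adjoint_adjoint, hl, map_neg] at h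
  rw [← h, neg_neg]

end Contraction

lemma mem_graphSubspace_orthogonal_iff {T : E →L[𝕜] F} {u : WithLp 2 (E × F)} :
    u ∈ (graphSubspace T)ᗮ ↔ u.fst + adjoint T u.snd = 0 := by
  have key : ∀ v ∈ graphSubspace T, ⟪v, u⟫_𝕜 = ⟪v.fst, u.fst + adjoint T u.snd⟫_𝕜 := by
    intro v hv
    change ⟪v.fst, u.fst⟫_𝕜 + ⟪v.snd, u.snd⟫_𝕜 = _
    rw [inner_add_right, adjoint_inner_right, mem_graphSubspace_iff.mp hv]
  rw [mem_orthogonal]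
  constructor
  · intro h
    set w := u.fst + adjoint T u.snd
    have hw : WithLp.toLp 2 (w, T w) ∈ graphSubspace T := mem_graphSubspace_iff.mpr rfl
    rw [← inner_self_eq_zero (𝕜 := 𝕜), ← h _ hw, key _ hw]
    rfl
  · intro h v hv
    rw [key v hv, h, inner_zero_right]

lemma adjoint_comp_one_sub_two_smul (X : E →L[𝕜] F) {P : E →L[𝕜] E} (hP : IsSelfAdjoint P) :
    adjoint (X ∘L (1 - 2 • P : E →L[𝕜] E)) = (1 - 2 • P) ∘L adjoint X := by
  rw [adjoint_comp, ← star_eq_adjoint, star_sub, star_one, star_nsmul, hP.star_eq]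

section Riccati

variable (A0 : E →L[𝕜] E) (A1 : F →L[𝕜] F) (V : F →L[𝕜] E)

noncomputable def riccati (W : E →L[𝕜] F) : E →L[𝕜] F :=
  A1 ∘L W - W ∘L A0 - W ∘L (V ∘L W) + adjoint V

variable {A0 A1 V}

lemma riccati_apply (W : E →L[𝕜] F) (x : E) :
    riccati A0 A1 V W x = A1 (W x) - W (A0 x) - W (V (W x)) + adjoint V x := rfl

lemma apply_mem_graphSubspace_of_riccati_eq_zero
    {B : WithLp 2 (E × F) →L[𝕜] WithLp 2 (E × F)}
    (hB : ∀ u : WithLp 2 (E × F),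
      WithLp.equiv 2 (E × F) (B u) =
        (A0 (WithLp.equiv 2 (E × F) u).1 + V (WithLp.equiv 2 (E × F) u).2,
         adjoint V (WithLp.equiv 2 (E × F) u).1 + A1 (WithLp.equiv 2 (E × F) u).2))
    {W : E →L[𝕜] F} (hW : riccati A0 A1 V W = 0) {u : WithLp 2 (E × F)}
    (hu : u ∈ graphSubspace W) : B u ∈ graphSubspace W := by
  rw [mem_graphSubspace_iff] at hu ⊢
  have h := congrArg (· u.fst) hW
  simp only [riccati_apply, zero_apply] at h
  change W (B u).fst = (B u).snd
  rw [show (B u).fst = _ from congrArg Prod.fst (hB u),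
    show (B u).snd = _ from congrArg Prod.snd (hB u)]
  change W (A0 u.fst + V u.snd) = adjoint V u.fst + A1 u.snd
  rw [← hu, map_add]
  linear_combination (norm := module) -h

/-- In the coordinates `x ↦ x ⊕ W x`, `B` restricted to the graph of `W` is `A0 + V W`, and
`1 + W† W` is the Gram operator of the graph. -/
lemma isSelfAdjoint_one_add_adjoint_comp_self_mul (hA0 : IsSelfAdjoint A0)
    (hA1 : IsSelfAdjoint A1) {W : E →L[𝕜] F} (hW : riccati A0 A1 V W = 0) :
    IsSelfAdjoint ((1 + adjoint W ∘L W) * (A0 + V ∘L W)) := by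
  simp only [IsSelfAdjoint, star_mul, star_add, star_one, star_eq_adjoint, adjoint_comp,
    adjoint_adjoint, hA0.adjoint_eq]
  ext x
  have h1 : adjoint W (riccati A0 A1 V W x) = 0 := by rw [hW, zero_apply, map_zero]
  have h2 : adjoint (riccati A0 A1 V W) (W x) = 0 := by rw [hW, map_zero, zero_apply]
  simp only [riccati, map_sub, map_add, adjoint_comp, adjoint_adjoint, hA0.adjoint_eq,
    hA1.adjoint_eq, sub_apply, add_apply, comp_apply] at h1 h2
  simp only [mul_apply_eq_comp, add_apply, one_apply_eq_self, comp_apply, map_add]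
  linear_combination (norm := module) h1 - h2

lemma riccati_comp_one_sub_two_smul (X : E →L[𝕜] F) (P : E →L[𝕜] E) :
    riccati A0 A1 V (X ∘L (1 - 2 • P : E →L[𝕜] E)) =
      riccati A0 A1 V X ∘L (1 - 2 • P : E →L[𝕜] E) +
        (2 : 𝕜) • (X ∘L (P * A0 - A0 * P + P * (V ∘L X) * (1 - 2 • P)) + adjoint V ∘L P) := by
  ext x
  simp only [riccati_apply, add_apply, comp_apply, smul_apply, sub_apply, mul_apply_eq_comp,
    one_apply_eq_self, map_sub, map_add, map_nsmul]
  module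

theorem commute_of_riccati_comp_one_sub_two_smul_eq_zero (hA0 : IsSelfAdjoint A0)
    (hA1 : IsSelfAdjoint A1) {X : E →L[𝕜] F} {P : E →L[𝕜] E} (hP : IsStarProjection P)
    (hGP : (adjoint X ∘L X) * P = P) (hX : riccati A0 A1 V X = 0)
    (hY : riccati A0 A1 V (X ∘L (1 - 2 • P : E →L[𝕜] E)) = 0) :
    Commute P A0 ∧ Commute P (V ∘L X) ∧ X ∘L (V ∘L X) ∘L P = adjoint V ∘L P := by
  set G := adjoint X ∘L X
  set M := V ∘L X
  have hE0 : X ∘L (P * A0 - A0 * P + P * M * (1 - 2 • P)) + adjoint V ∘L P = 0 := by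
    have h := riccati_comp_one_sub_two_smul (A0 := A0) (A1 := A1) (V := V) X P
    rw [hX, hY, zero_comp, zero_add, eq_comm, smul_eq_zero] at h
    exact h.resolve_left two_ne_zero
  have hE : G * (P * A0 - A0 * P + P * M * (1 - 2 • P)) + star M * P = 0 :=
    calc G * (P * A0 - A0 * P + P * M * (1 - 2 • P)) + star M * P
        = adjoint X ∘L (X ∘L (P * A0 - A0 * P + P * M * (1 - 2 • P)) + adjoint V ∘L P) := by
          rw [comp_add, star_eq_adjoint, adjoint_comp]
          rfl
      _ = 0 := by rw [hE0, comp_zero]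
  have hG : IsSelfAdjoint G := (isPositive_adjoint_comp_self X).isSelfAdjoint
  have hYY : adjoint (X ∘L (1 - 2 • P : E →L[𝕜] E)) ∘L (X ∘L (1 - 2 • P : E →L[𝕜] E)) = G :=
    calc adjoint (X ∘L (1 - 2 • P : E →L[𝕜] E)) ∘L (X ∘L (1 - 2 • P : E →L[𝕜] E))
        = (1 - 2 • P) * G * (1 - 2 • P) := by
          rw [adjoint_comp_one_sub_two_smul X hP.isSelfAdjoint]
          rfl
      _ = G := one_sub_two_nsmul_mul_mul_one_sub_two_nsmul hP.isIdempotentElem hGP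
          (hP.isSelfAdjoint.mul_eq_self_of_mul_eq_self hG hGP)
  have hXs := isSelfAdjoint_one_add_adjoint_comp_self_mul hA0 hA1 hX
  have hYs := isSelfAdjoint_one_add_adjoint_comp_self_mul hA0 hA1 hY
  rw [hYY] at hYs
  have : IsAddTorsionFree (E →L[𝕜] E) := .of_isTorsionFree 𝕜 _
  obtain ⟨hA, hM⟩ := commute_of_isSelfAdjoint_mul_of_eq_zero hP hA0 hG hGP
    (fun _ => eq_zero_of_one_add_adjoint_comp_self_mul_eq_zero X) hXs hYs hE
  refine ⟨hA, hM, ?_⟩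
  rw [mul_sub_mul_add_mul_mul_one_sub_two_nsmul hP.isIdempotentElem hA hM, comp_neg,
    neg_add_eq_zero] at hE0
  exact (comp_assoc X M P).trans hE0

theorem riccati_comp_one_sub_two_smul_eq_zero {X : E →L[𝕜] F} {P : E →L[𝕜] E}
    (hP : IsIdempotentElem P) (hX : riccati A0 A1 V X = 0) (hA : Commute P A0)
    (hM : Commute P (V ∘L X)) (hXVX : X ∘L (V ∘L X) ∘L P = adjoint V ∘L P) :
    riccati A0 A1 V (X ∘L (1 - 2 • P : E →L[𝕜] E)) = 0 := by
  rw [riccati_comp_one_sub_two_smul, hX, zero_comp, zero_add,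
    mul_sub_mul_add_mul_mul_one_sub_two_nsmul hP hA hM, comp_neg, ← hXVX]
  exact smul_eq_zero_of_right _ (neg_add_cancel _)

end Riccati

/-- The paper's `T_X (Y)`. -/
noncomputable abbrev kerOneAddAdjointComp (X Y : E →L[𝕜] F) : Submodule 𝕜 E :=
  LinearMap.ker (ContinuousLinearMap.id 𝕜 E + adjoint Y ∘L X).toLinearMap

section Kernel

variable {X Y : E →L[𝕜] F}

lemma mem_kerOneAddAdjointComp_iff {l : E} :
    l ∈ kerOneAddAdjointComp X Y ↔ adjoint Y (X l) = -l := by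
  simp [add_eq_zero_iff_eq_neg']

lemma sup_kerOneAddAdjointComp_eq_top
    (h : graphSubspace X ∈
      Module.End.invtSubmodule (graphSubspace Y).starProjection.toLinearMap) :
    LinearMap.ker (Y - X).toLinearMap ⊔ kerOneAddAdjointComp X Y = ⊤ := by
  rw [eq_top_iff]
  intro x _
  set K := graphSubspace Y
  have hu : WithLp.toLp 2 (x, X x) ∈ graphSubspace X := mem_graphSubspace_iff.mpr rfl
  set v := K.starProjection (WithLp.toLp 2 (x, X x))
  have hvX : X v.fst = v.snd := mem_graphSubspace_iff.mp (h hu)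
  have hvY : Y v.fst = v.snd := mem_graphSubspace_iff.mp (K.starProjection_apply_mem _)
  have hw := mem_graphSubspace_orthogonal_iff.mp
    (K.sub_starProjection_mem_orthogonal (WithLp.toLp 2 (x, X x)))
  simp only [WithLp.sub_fst, WithLp.sub_snd, WithLp.toLp_fst, WithLp.toLp_snd] at hw
  refine mem_sup.mpr ⟨v.fst, ?_, x - v.fst, ?_, add_sub_cancel _ _⟩
  · simp [hvX, hvY]
  · rw [mem_kerOneAddAdjointComp_iff, map_sub, hvX]
    exact eq_neg_of_add_eq_zero_right hw

lemma kerOneAddAdjointComp_le_ker_id_sub_adjoint_comp_self (hX : ‖X‖ ≤ 1) (hY : ‖Y‖ ≤ 1) :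
    kerOneAddAdjointComp X Y ≤
      LinearMap.ker (ContinuousLinearMap.id 𝕜 E - adjoint X ∘L X).toLinearMap := fun _ hl =>
  sub_eq_zero.mpr (adjoint_apply_apply_eq_of_adjoint_apply_apply_eq_neg hX hY
    (mem_kerOneAddAdjointComp_iff.mp hl)).symm

lemma ker_sub_le_orthogonal_kerOneAddAdjointComp (hX : ‖X‖ ≤ 1) (hY : ‖Y‖ ≤ 1) :
    LinearMap.ker (Y - X).toLinearMap ≤ (kerOneAddAdjointComp X Y)ᗮ := by
  intro n hn m hm
  have hYn : Y n = X n := sub_eq_zero.mp hn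
  rw [mem_kerOneAddAdjointComp_iff] at hm
  have h1 : ⟪m, n⟫_𝕜 = ⟪X m, X n⟫_𝕜 := by
    rw [← adjoint_inner_left, adjoint_apply_apply_eq_of_adjoint_apply_apply_eq_neg hX hY hm]
  have h2 : ⟪X m, X n⟫_𝕜 = -⟪m, n⟫_𝕜 := by
    rw [← hYn, ← adjoint_inner_left, hm, inner_neg_left]
  linear_combination (h1 + h2) / 2

theorem eq_comp_one_sub_two_smul_starProjection (hX : ‖X‖ ≤ 1) (hY : ‖Y‖ ≤ 1)
    (htop : LinearMap.ker (Y - X).toLinearMap ⊔ kerOneAddAdjointComp X Y = ⊤)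
    {L : Submodule 𝕜 E} [L.HasOrthogonalProjection] (hL : kerOneAddAdjointComp X Y = L) :
    Y = X ∘L (1 - 2 • L.starProjection : E →L[𝕜] E) := by
  ext x
  rw [hL] at htop
  obtain ⟨n, hn, l, hl, rfl⟩ := mem_sup.mp (htop ▸ mem_top : x ∈ _ ⊔ L)
  have hPl : L.starProjection (n + l) = l := by
    refine eq_starProjection_of_mem_orthogonal hl ?_
    rw [add_sub_cancel_right, ← hL]
    exact ker_sub_le_orthogonal_kerOneAddAdjointComp hX hY hn
  rw [← hL, mem_kerOneAddAdjointComp_iff] at hl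
  have hYn : Y n = X n := sub_eq_zero.mp hn
  simp [hPl, hYn, apply_eq_neg_of_adjoint_apply_apply_eq_neg hX hY hl]
  module

lemma kerOneAddAdjointComp_comp_one_sub_two_smul_starProjection {L : Submodule 𝕜 E}
    [L.HasOrthogonalProjection] (hGP : (adjoint X ∘L X) * L.starProjection = L.starProjection) :
    kerOneAddAdjointComp X (X ∘L (1 - 2 • L.starProjection : E →L[𝕜] E)) = L := by
  set P := L.starProjection
  have hP : IsSelfAdjoint P := isSelfAdjoint_starProjection L
  have hGP' (x : E) : adjoint X (X (P x)) = P x := congrArg (· x) hGP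
  have hPG' (x : E) : P (adjoint X (X x)) = P x := congrArg (· x)
    (hP.mul_eq_self_of_mul_eq_self (isPositive_adjoint_comp_self X).isSelfAdjoint hGP)
  ext x
  rw [mem_kerOneAddAdjointComp_iff, adjoint_comp_one_sub_two_smul X hP]
  simp only [comp_apply, sub_apply, one_apply_eq_self, smul_apply, hPG']
  constructor
  · intro h
    rw [← starProjection_eq_self_iff, ← sub_eq_zero]
    apply eq_zero_of_adjoint_apply_apply_eq_neg X
    rw [map_sub, map_sub, hGP']
    linear_combination (norm := module) -h
  · intro hx
    rw [← starProjection_eq_self_iff.mpr hx, hGP',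
      starProjection_eq_self_iff.mpr (L.starProjection_apply_mem x)]
    module

end Kernel

end HilbertSpace

theorem bijection_contractive_solutions_reducing_subspaces_general
    {H0 H1 : Type*}
    [NormedAddCommGroup H0] [InnerProductSpace ℂ H0] [CompleteSpace H0]
    [NormedAddCommGroup H1] [InnerProductSpace ℂ H1] [CompleteSpace H1]
    (A0 : H0 →L[ℂ] H0) (A1 : H1 →L[ℂ] H1) (V : H1 →L[ℂ] H0)
    (hA0 : IsSelfAdjoint A0) (hA1 : IsSelfAdjoint A1)
    (B : WithLp 2 (H0 × H1) →L[ℂ] WithLp 2 (H0 × H1))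
    (hB : ∀ u : WithLp 2 (H0 × H1),
      WithLp.equiv 2 (H0 × H1) (B u) =
        (A0 (WithLp.equiv 2 (H0 × H1) u).1 + V (WithLp.equiv 2 (H0 × H1) u).2,
         ContinuousLinearMap.adjoint V (WithLp.equiv 2 (H0 × H1) u).1
           + A1 (WithLp.equiv 2 (H0 × H1) u).2))
    (X : H0 →L[ℂ] H1) (hXnorm : ‖X‖ ≤ 1)
    (hX : A1.comp X - X.comp A0 - X.comp (V.comp X) + ContinuousLinearMap.adjoint V = 0)
    (Q : WithLp 2 (H0 × H1) →L[ℂ] WithLp 2 (H0 × H1))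
    (hQ : IsIdempotentElem Q)
    (hQran : LinearMap.range Q.toLinearMap =
      (LinearMap.graph X.toLinearMap).map (WithLp.linearEquiv 2 ℂ (H0 × H1)).symm.toLinearMap)
    (hQcomm : ∀ R : WithLp 2 (H0 × H1) →L[ℂ] WithLp 2 (H0 × H1),
      IsIdempotentElem R → IsSelfAdjoint R →
      (∀ u ∈ LinearMap.range R.toLinearMap, B u ∈ LinearMap.range R.toLinearMap) → Q * R = R * Q) :
    Set.InjOn
      (fun Y : H0 →L[ℂ] H1 =>
        LinearMap.ker (ContinuousLinearMap.id ℂ H0 + (ContinuousLinearMap.adjoint Y).comp X).toLinearMap)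
      {Y : H0 →L[ℂ] H1 | ‖Y‖ ≤ 1 ∧
        A1.comp Y - Y.comp A0 - Y.comp (V.comp Y) + ContinuousLinearMap.adjoint V = 0} ∧
    (fun Y : H0 →L[ℂ] H1 =>
        LinearMap.ker (ContinuousLinearMap.id ℂ H0 + (ContinuousLinearMap.adjoint Y).comp X).toLinearMap) ''
      {Y : H0 →L[ℂ] H1 | ‖Y‖ ≤ 1 ∧
        A1.comp Y - Y.comp A0 - Y.comp (V.comp Y) + ContinuousLinearMap.adjoint V = 0} =
      {L : Submodule ℂ H0 | IsClosed (L : Set H0) ∧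
        L ≤ LinearMap.ker (ContinuousLinearMap.id ℂ H0 - (ContinuousLinearMap.adjoint X).comp X).toLinearMap ⊓
            LinearMap.ker (X.comp (V.comp X) - ContinuousLinearMap.adjoint V).toLinearMap ∧
        (L.map A0.toLinearMap ≤ L ∧ Lᗮ.map A0.toLinearMap ≤ Lᗮ) ∧
        (L.map (V.comp X).toLinearMap ≤ L ∧ Lᗮ.map (V.comp X).toLinearMap ≤ Lᗮ)} := by
  have hform {Y : H0 →L[ℂ] H1} (hYn : ‖Y‖ ≤ 1) (hY : riccati A0 A1 V Y = 0)
      {L : Submodule ℂ H0} [L.HasOrthogonalProjection] (hL : kerOneAddAdjointComp X Y = L) :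
      Y = X ∘L (1 - 2 • L.starProjection : H0 →L[ℂ] H0) := by
    have hinv := range_mem_invtSubmodule_starProjection hQ hQcomm
      (fun _ => apply_mem_graphSubspace_of_riccati_eq_zero hB hY)
    rw [hQran] at hinv
    exact eq_comp_one_sub_two_smul_starProjection hXnorm hYn
      (sup_kerOneAddAdjointComp_eq_top hinv) hL
  refine ⟨fun Y₁ h₁ Y₂ h₂ heq => (hform h₁.1 h₁.2 rfl).trans (hform h₂.1 h₂.2 heq.symm).symm, ?_⟩
  ext L
  constructor
  · rintro ⟨Y, ⟨hYn, hY⟩, rfl⟩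
    have hGP := (le_ker_sub_iff_comp_starProjection_eq.mp
      (kerOneAddAdjointComp_le_ker_id_sub_adjoint_comp_self hXnorm hYn)).symm
    rw [hform hYn hY rfl] at hY
    obtain ⟨hA, hM, hXVX⟩ := commute_of_riccati_comp_one_sub_two_smul_eq_zero hA0 hA1
      isStarProjection_starProjection hGP hX hY
    exact ⟨isClosed_ker _, le_inf (le_ker_sub_iff_comp_starProjection_eq.mpr hGP.symm)
      (le_ker_sub_iff_comp_starProjection_eq.mpr hXVX), commute_starProjection_iff.mp hA,
      commute_starProjection_iff.mp hM⟩
  · rintro ⟨hL, hLker, hA, hM⟩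
    have : CompleteSpace L := hL.completeSpace_coe
    rw [le_inf_iff, le_ker_sub_iff_comp_starProjection_eq,
      le_ker_sub_iff_comp_starProjection_eq] at hLker
    exact ⟨X ∘L (1 - 2 • L.starProjection : H0 →L[ℂ] H0),
      ⟨(norm_comp_one_sub_two_smul_starProjection_le X).trans hXnorm,
        riccati_comp_one_sub_two_smul_eq_zero L.isIdempotentElem_starProjection hX
          (commute_starProjection_iff.mpr hA) (commute_starProjection_iff.mpr hM) hLker.2⟩,
      kerOneAddAdjointComp_comp_one_sub_two_smul_starProjection hLker.1.symm⟩

/-- Let `X` be a contractive solution of the Riccati equation such that the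
orthogonal projection `Q` onto the graph `G(H₀, X)` commutes with the orthogonal projection
onto every closed `B`-invariant subspace of `H = H₀ ⊕ H₁`.  Then the map
`T_X (Y) = Ker (I + Y* X)` is injective on the set `S` of all contractive solutions of the
Riccati equation, and its image is the set `R` of all closed subspaces
`L ⊆ Ker (I - X* X) ⊓ Ker (X V X - V*)` of `H₀` reducing both `A₀` and `V X`. -/
theorem bijection_contractive_solutions_reducing_subspaces
    {H0 H1 : Type*}
    [NormedAddCommGroup H0] [InnerProductSpace ℂ H0] [CompleteSpace H0]
    [TopologicalSpace.SeparableSpace H0]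
    [NormedAddCommGroup H1] [InnerProductSpace ℂ H1] [CompleteSpace H1]
    [TopologicalSpace.SeparableSpace H1]
    (A0 : H0 →L[ℂ] H0) (A1 : H1 →L[ℂ] H1) (V : H1 →L[ℂ] H0)
    (hA0 : IsSelfAdjoint A0) (hA1 : IsSelfAdjoint A1)
    (B : WithLp 2 (H0 × H1) →L[ℂ] WithLp 2 (H0 × H1))
    (hB : ∀ u : WithLp 2 (H0 × H1),
      WithLp.equiv 2 (H0 × H1) (B u) =
        (A0 (WithLp.equiv 2 (H0 × H1) u).1 + V (WithLp.equiv 2 (H0 × H1) u).2,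
         ContinuousLinearMap.adjoint V (WithLp.equiv 2 (H0 × H1) u).1
           + A1 (WithLp.equiv 2 (H0 × H1) u).2))
    (X : H0 →L[ℂ] H1) (hXnorm : ‖X‖ ≤ 1)
    (hX : A1.comp X - X.comp A0 - X.comp (V.comp X) + ContinuousLinearMap.adjoint V = 0)
    (Q : WithLp 2 (H0 × H1) →L[ℂ] WithLp 2 (H0 × H1))
    (hQ : IsIdempotentElem Q) (hQsa : IsSelfAdjoint Q)
    (hQran : LinearMap.range Q.toLinearMap =
      (LinearMap.graph X.toLinearMap).map (WithLp.linearEquiv 2 ℂ (H0 × H1)).symm.toLinearMap)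
    (hQcomm : ∀ R : WithLp 2 (H0 × H1) →L[ℂ] WithLp 2 (H0 × H1),
      IsIdempotentElem R → IsSelfAdjoint R →
      (∀ u ∈ LinearMap.range R.toLinearMap, B u ∈ LinearMap.range R.toLinearMap) → Q * R = R * Q) :
    Set.InjOn
      (fun Y : H0 →L[ℂ] H1 =>
        LinearMap.ker (ContinuousLinearMap.id ℂ H0 + (ContinuousLinearMap.adjoint Y).comp X).toLinearMap)
      {Y : H0 →L[ℂ] H1 | ‖Y‖ ≤ 1 ∧
        A1.comp Y - Y.comp A0 - Y.comp (V.comp Y) + ContinuousLinearMap.adjoint V = 0} ∧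
    (fun Y : H0 →L[ℂ] H1 =>
        LinearMap.ker (ContinuousLinearMap.id ℂ H0 + (ContinuousLinearMap.adjoint Y).comp X).toLinearMap) ''
      {Y : H0 →L[ℂ] H1 | ‖Y‖ ≤ 1 ∧
        A1.comp Y - Y.comp A0 - Y.comp (V.comp Y) + ContinuousLinearMap.adjoint V = 0} =
      {L : Submodule ℂ H0 | IsClosed (L : Set H0) ∧
        L ≤ LinearMap.ker (ContinuousLinearMap.id ℂ H0 - (ContinuousLinearMap.adjoint X).comp X).toLinearMap ⊓
            LinearMap.ker (X.comp (V.comp X) - ContinuousLinearMap.adjoint V).toLinearMap ∧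
        (L.map A0.toLinearMap ≤ L ∧ Lᗮ.map A0.toLinearMap ≤ Lᗮ) ∧
        (L.map (V.comp X).toLinearMap ≤ L ∧ Lᗮ.map (V.comp X).toLinearMap ≤ Lᗮ)} :=
  bijection_contractive_solutions_reducing_subspaces_general A0 A1 V hA0 hA1 B hB X hXnorm hX Q hQ
    hQran hQcomm
end
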